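/- Let N be an abelian group, A a unital algebra, σ : N → Aut(A) and m : N → Aut(A) maps, a : N → Aˣ units with m_h = Ad(a_h) ∘ σ_h, and μ : N × N → ℂˣ scalars with μ(h,h')·a_{hh'} = a_h · σ_h(a_{h'}). Suppose n is an automorphism commuting with each σ_h and there are units w_h and scalars c_h ∈ ℂˣ with n(a_h) = c_h · w_h · a_h and w_{hh'} = w_h · m_h(w_{h'}). Then the map h ↦ c_h is a group homomorphism from N to ℂˣ. -/

import Mathlib

/-!
Apply `n` to `a_h · σ_h(a_{h'}) = μ(h,h') · a_{hh'}`. On the right this gives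
`μ(h,h') c_{hh'} · w_{hh'} a_{hh'}`. On the left, since `n` commutes with `σ_h`, it gives
`c_h c_{h'} · w_h a_h σ_h(w_{h'}) σ_h(a_{h'})`, and the cocycle identity rewrites
`w_h a_h σ_h(w_{h'})` as `w_{hh'} a_h`, so the left side is `μ(h,h') c_h c_{h'} · w_{hh'} a_{hh'}`.
Nonzero scalars act injectively on the unit `w_{hh'} a_{hh'}`, so `c_{hh'} = c_h c_{h'}`.
-/

theorem Units.mul_mul_eq_of_eq_mul_conj {M : Type*} [Monoid M] (a : Mˣ) {w w' x y : M}
    (hw : w' = w * (a * x * ↑a⁻¹)) : w * a * (x * y) = w' * (a * y) := by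
  simp only [hw, mul_assoc, Units.inv_mul_cancel_left]

theorem AlgHom.map_mul_map_eq_of_twisted_cocycle {R A : Type*} [CommSemiring R] [Semiring A]
    [Algebra R A] (n s : A →ₐ[R] A) (hns : ∀ x, n (s x) = s (n x)) (a : Aˣ) {b w v w' : A}
    {ca cb : R} (ha : n a = ca • (w * a)) (hb : n b = cb • (v * b))
    (hw : w' = w * (a * s v * ↑a⁻¹)) :
    n (a * s b) = (ca * cb) • (w' * (a * s b)) := by
  rw [map_mul, hns, ha, hb, map_smul, map_mul, smul_mul_smul_comm,
    a.mul_mul_eq_of_eq_mul_conj hw]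

/-- The character argument: given σ : N → Aut(A), units a_h with scalars μ(h,h')
satisfying a_h·σ_h(a_{h'}) = μ(h,h')·a_{hh'}, an automorphism n commuting with all
σ_h, units w_h satisfying the cocycle identity w_{hh'} = w_h·m_h(w_{h'}) for
m_h = Ad(a_h)∘σ_h, and scalars c_h with n(a_h) = c_h·w_h·a_h, the map h ↦ c_h is a
group homomorphism N → ℂˣ. -/
theorem stmt9 {N A : Type*} [CommGroup N] [Ring A] [Algebra ℂ A] [Nontrivial A]
    (σ : N →* (A ≃ₐ[ℂ] A)) (a : N → Aˣ) (μ : N × N → ℂˣ)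
    (hμ : ∀ h h' : N, (a h : A) * σ h (a h' : A) = ((μ (h, h') : ℂ)) • (a (h * h') : A))
    (n : A ≃ₐ[ℂ] A) (hn : ∀ (h : N) (x : A), n (σ h x) = σ h (n x))
    (w : N → Aˣ) (c : N → ℂˣ)
    (hc : ∀ h : N, n (a h : A) = (c h : ℂ) • ((w h : A) * (a h : A)))
    (hw : ∀ h h' : N, (w (h * h') : A) =
      (w h : A) * ((a h : A) * σ h (w h' : A) * (((a h)⁻¹ : Aˣ) : A))) :
    ∀ h h' : N, c (h * h') = c h * c h' := by
  intro h h'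
  set u : Aˣ := w (h * h') * a (h * h')
  have hu : ((μ (h, h') : ℂ) * c (h * h')) • (u : A)
      = ((μ (h, h') : ℂ) * (c h * c h')) • (u : A) := by
    calc ((μ (h, h') : ℂ) * c (h * h')) • (u : A)
        = n ((μ (h, h') : ℂ) • (a (h * h') : A)) := by
          rw [map_smul, hc, smul_smul, Units.val_mul]
      _ = n (a h * σ h (a h')) := by rw [hμ]
      _ = ((c h : ℂ) * c h') • (w (h * h') * (a h * σ h (a h'))) :=
          AlgHom.map_mul_map_eq_of_twisted_cocycle (n : A →ₐ[ℂ] A) (σ h : A →ₐ[ℂ] A)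
            (hn h) (a h) (hc h) (hc h') (hw h h')
      _ = ((μ (h, h') : ℂ) * (c h * c h')) • (u : A) := by
          rw [hμ, mul_smul_comm, smul_smul, mul_comm, Units.val_mul]
  have hc' : (c (h * h') : ℂ) = c h * c h' :=
    mul_left_cancel₀ (μ (h, h')).ne_zero (smul_left_injective ℂ u.ne_zero hu)
  exact Units.ext (by push_cast; exact hc')
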